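/- arXiv:1704.03292 — 3 statements merged into one kernel-verified Lean document; each statement's English description precedes it below -/
import Mathlib

section
/- Let T = {s_1, …, s_k} be a team with s_1 < … < s_k (in a fixed total order on assignments), k ≥ 3, s_1 = 0, and let φ be a conjunction of dependence atoms. Then T ⊨ φ if and only if: {s_1,…,s_{k−1}} ⊨ φ, {s_1,…,s_{k−2}, s_k} ⊨ φ, and {0, s_{k−1} + s_k} ⊨ φ. -/
/-! Satisfaction of dependence atoms is checked pair by pair, so it suffices to look at the pairs
of `T`. A pair avoiding `s_k` lies in `{s_1, …, s_{k-1}}`, one avoiding `s_{k-1}` lies in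
`{s_1, …, s_{k-2}, s_k}`, and the only remaining pair is `{s_{k-1}, s_k}`, which translation by
`s_k` turns into `{0, s_{k-1} + s_k}` because `s_k + s_k = 0` over `𝔽₂`. -/

/-- A team `T` satisfies a conjunction of dependence atoms given as a list of pairs. -/
def SatDepList {n : ℕ} (T : Finset (Fin n → ZMod 2))
    (L : List (Set (Fin n) × Set (Fin n))) : Prop :=
  ∀ pq ∈ L, ∀ s ∈ T, ∀ t ∈ T, (∀ i ∈ pq.1, s i = t i) → ∀ i ∈ pq.2, s i = t i

namespace SatDepList

variable {n : ℕ} {L : List (Set (Fin n) × Set (Fin n))}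

theorem mono {T T' : Finset (Fin n → ZMod 2)} (hsub : T' ⊆ T) (h : SatDepList T L) :
    SatDepList T' L :=
  fun pq hpq x hx y hy => h pq hpq x (hsub hx) y (hsub hy)

theorem iff_forall_pair {T : Finset (Fin n → ZMod 2)} :
    SatDepList T L ↔ ∀ x ∈ T, ∀ y ∈ T, SatDepList {x, y} L := by
  refine ⟨fun h x hx y hy => h.mono (Finset.insert_subset hx (Finset.singleton_subset_iff.2 hy)),
    fun h pq hpq x hx y hy => ?_⟩
  exact h x hx y hy pq hpq x (Finset.mem_insert_self _ _) y
    (Finset.mem_insert_of_mem (Finset.mem_singleton_self _))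

theorem image_add_right_iff (T : Finset (Fin n → ZMod 2)) (v : Fin n → ZMod 2) :
    SatDepList (T.image (· + v)) L ↔ SatDepList T L := by
  simp only [SatDepList, Finset.forall_mem_image, Pi.add_apply, add_left_inj]

theorem pair_iff_zero_add (a b : Fin n → ZMod 2) :
    SatDepList {a, b} L ↔ SatDepList {0, a + b} L := by
  have hbb : b + b = 0 := funext fun i => CharTwo.add_self_eq_zero (b i)
  rw [← image_add_right_iff {a, b} b, Finset.image_insert, Finset.image_singleton, hbb,
    Finset.pair_comm]

theorem of_erase_of_erase {T : Finset (Fin n → ZMod 2)} {a b : Fin n → ZMod 2} (hab : a ≠ b)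
    (ha : SatDepList (T.erase a) L) (hb : SatDepList (T.erase b) L)
    (hpair : SatDepList {a, b} L) : SatDepList T L := by
  rw [iff_forall_pair] at ha hb ⊢
  intro x hx y hy
  by_cases hxy_b : x ≠ b ∧ y ≠ b
  · exact hb x (Finset.mem_erase.2 ⟨hxy_b.1, hx⟩) y (Finset.mem_erase.2 ⟨hxy_b.2, hy⟩)
  by_cases hxy_a : x ≠ a ∧ y ≠ a
  · exact ha x (Finset.mem_erase.2 ⟨hxy_a.1, hx⟩) y (Finset.mem_erase.2 ⟨hxy_a.2, hy⟩)
  push Not at hxy_b hxy_a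
  rcases eq_or_ne x a with rfl | hxa
  · rwa [hxy_b hab]
  obtain rfl := hxy_a hxa
  rcases eq_or_ne x b with rfl | hxb
  · rwa [Finset.pair_comm]
  · exact absurd (hxy_b hxb) hab

theorem iff_erase_erase_pair {T : Finset (Fin n → ZMod 2)} {a b : Fin n → ZMod 2} (hab : a ≠ b)
    (ha : a ∈ T) (hb : b ∈ T) :
    SatDepList T L ↔
      SatDepList (T.erase b) L ∧ SatDepList (T.erase a) L ∧ SatDepList {a, b} L :=
  ⟨fun h => ⟨h.mono (Finset.erase_subset _ _), h.mono (Finset.erase_subset _ _),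
      iff_forall_pair.1 h a ha b hb⟩,
    fun ⟨hb', ha', hpair⟩ => of_erase_of_erase hab ha' hb' hpair⟩

end SatDepList

theorem reduce_satisfying_teams {n k : ℕ} (hk : 3 ≤ k)
    [LinearOrder (Fin n → ZMod 2)]
    (s : Fin k → (Fin n → ZMod 2)) (hmono : StrictMono s)
    (L : List (Set (Fin n) × Set (Fin n))) :
    SatDepList (Finset.univ.image s) L ↔
      (SatDepList ((Finset.univ.image s).erase (s ⟨k - 1, by omega⟩)) L ∧
       SatDepList ((Finset.univ.image s).erase (s ⟨k - 2, by omega⟩)) L ∧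
       SatDepList ({0, s ⟨k - 2, by omega⟩ + s ⟨k - 1, by omega⟩} :
          Finset (Fin n → ZMod 2)) L) := by
  have hne : s ⟨k - 2, by omega⟩ ≠ s ⟨k - 1, by omega⟩ :=
    hmono.injective.ne (by simp only [ne_eq, Fin.mk.injEq]; omega)
  rw [SatDepList.iff_erase_erase_pair hne (Finset.mem_image_of_mem s (Finset.mem_univ _))
    (Finset.mem_image_of_mem s (Finset.mem_univ _)), SatDepList.pair_iff_zero_add]
end

section
/- Fix k ≥ 2 variables x_1,…,x_k and let φ = ⋀_{i=1}^{k−1} dep(x_i, x_k). Then for every team T with T ⊨ φ and |T| ≥ 3, all assignments in T agree on x_k, i.e., |T restricted to {x_k}| = 1. -/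
/-!
If two assignments `s, t` of the team differ on `x_k`, then every dependence atom forces them to
differ on every other variable as well. Over a two-element value set any third assignment `u`
agrees with `s` or with `t` on `x_k`, say with `s`; wherever `u` differed from `s` it would agree
with `t`, hence (by dependence) also on `x_k`, which is impossible. So `u = s`, and a team with a
disagreement on `x_k` has at most two members.
-/

def SatisfiesDep {ι α : Type*} (T : Finset (ι → α)) (i j : ι) : Prop :=
  ∀ s ∈ T, ∀ t ∈ T, s i = t i → s j = t j

theorem eq_of_ne_of_ne_of_card_le_two {α : Type*} [Fintype α] (hα : Fintype.card α ≤ 2)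
    {a b c : α} (hab : a ≠ b) (hca : c ≠ a) : c = b := by
  classical
  by_contra hcb
  have hthree : ({a, b, c} : Finset α).card = 3 :=
    Finset.card_eq_three.2 ⟨a, b, c, hab, hca.symm, Ne.symm hcb, rfl⟩
  have := Finset.card_le_univ ({a, b, c} : Finset α)
  omega

section

variable {ι α : Type*} [Fintype α] {T : Finset (ι → α)} {j : ι}

theorem SatisfiesDep.eq_of_apply_eq_of_apply_ne (hα : Fintype.card α ≤ 2)
    (hdep : ∀ i ≠ j, SatisfiesDep T i j) {s t u : ι → α} (hs : s ∈ T) (ht : t ∈ T) (hu : u ∈ T)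
    (hst : s j ≠ t j) (hus : u j = s j) : u = s := by
  funext i
  by_cases hij : i = j
  · exact hij ▸ hus
  by_contra hne
  have hsi : s i ≠ t i := fun h => hst (hdep i hij s hs t ht h)
  have hut : u i = t i := eq_of_ne_of_ne_of_card_le_two hα hsi hne
  exact hst (hus ▸ hdep i hij u hu t ht hut)

theorem SatisfiesDep.eq_or_eq_of_apply_ne (hα : Fintype.card α ≤ 2)
    (hdep : ∀ i ≠ j, SatisfiesDep T i j) {s t : ι → α} (hs : s ∈ T) (ht : t ∈ T)
    (hst : s j ≠ t j) : ∀ u ∈ T, u = s ∨ u = t := by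
  intro u hu
  by_cases hus : u j = s j
  · exact Or.inl (eq_of_apply_eq_of_apply_ne hα hdep hs ht hu hst hus)
  · have hut : u j = t j := eq_of_ne_of_ne_of_card_le_two hα hst hus
    exact Or.inr (eq_of_apply_eq_of_apply_ne hα hdep ht hs hu (Ne.symm hst) hut)

theorem SatisfiesDep.card_image_apply_eq_one [DecidableEq α] (hα : Fintype.card α ≤ 2)
    (hdep : ∀ i ≠ j, SatisfiesDep T i j) (hT : 2 < T.card) :
    (T.image fun s => s j).card = 1 := by
  have hpos : 0 < (T.image fun s => s j).card :=
    Finset.card_pos.2 ((Finset.card_pos.1 (by omega)).image _)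
  suffices (T.image fun s => s j).card ≤ 1 by omega
  by_contra! hlt
  obtain ⟨_, hs', _, ht', hst⟩ := Finset.one_lt_card.1 hlt
  obtain ⟨s, hs, rfl⟩ := Finset.mem_image.1 hs'
  obtain ⟨t, ht, rfl⟩ := Finset.mem_image.1 ht'
  classical
  have hsub : T ⊆ {s, t} := fun u hu => by
    simpa using eq_or_eq_of_apply_ne hα hdep hs ht hst u hu
  have hle : T.card ≤ ({s, t} : Finset _).card := Finset.card_le_card hsub
  have hpair : ({s, t} : Finset _).card ≤ 2 := Finset.card_le_two
  omega

end

theorem enumteamsize_counterexample {k : ℕ} (hk : 2 ≤ k)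
    (T : Finset (Fin k → ZMod 2))
    (hsat : ∀ i : Fin k, (i : ℕ) < k - 1 → ∀ s ∈ T, ∀ t ∈ T,
      s i = t i → s ⟨k - 1, by omega⟩ = t ⟨k - 1, by omega⟩)
    (hcard : 3 ≤ T.card) :
    (T.image fun s => s ⟨k - 1, by omega⟩).card = 1 := by
  refine SatisfiesDep.card_image_apply_eq_one (ZMod.card 2).le (fun i hi => hsat i ?_) hcard
  have hlt : (i : ℕ) < k := i.isLt
  have hne : (i : ℕ) ≠ k - 1 := fun h => hi (Fin.ext h)
  omega
end

section
/- Let S be a finite totally ordered set and X ⊆ P(S) a downward closed family of subsets (T ∈ X and R ⊆ T imply R ∈ X). Order X lexicographically: compare sets by listing their elements in increasing order; a set R precedes S' if at the first point of difference R has a smaller element, or R is a proper initial-prefix of S' as sorted sequences. Then for any two consecutive elements R, R' of X in this lexicographic order, the symmetric difference satisfies |R △ R'| ≤ 3. -/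
/-! Write the sorted lists of `R < R'` as `p ++ u` and `p ++ b :: t'`, where `p` is their longest
common prefix. The set `p ∪ {b} ⊆ R'` lies in `X` and above `R`, so consecutiveness forces
`R' = p ∪ {b}`. If `u` had three or more elements, deleting its second one would give a subset
of `R` strictly between `R` and `R'`. Hence `R △ R' ⊆ u ∪ {b}` has at most three elements. -/

namespace List

theorem Lex.exists_eq_append_cons {α : Type*} {r : α → α → Prop} {l l' : List α}
    (h : Lex r l l') :
    ∃ p b t', l' = p ++ b :: t' ∧ (l = p ∨ ∃ a t, l = p ++ a :: t ∧ r a b) := by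
  induction h with
  | nil => exact ⟨[], _, _, rfl, .inl rfl⟩
  | @cons a _ _ _ ih =>
    obtain ⟨p, b, t', rfl, hl⟩ := ih
    refine ⟨a :: p, b, t', rfl, ?_⟩
    rcases hl with rfl | ⟨a', t, rfl, hab⟩
    · exact .inl rfl
    · exact .inr ⟨a', t, rfl, hab⟩
  | @rel a l₁ b l₂ hab => exact ⟨[], b, l₂, rfl, .inr ⟨a, l₁, rfl, hab⟩⟩

theorem card_symmDiff_toFinset_append_le {α : Type*} [DecidableEq α] (p u v : List α) :
    (symmDiff (p ++ u).toFinset (p ++ v).toFinset).card ≤ u.length + v.length := by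
  have hsub : symmDiff (p ++ u).toFinset (p ++ v).toFinset ⊆ (u ++ v).toFinset := by
    intro x hx
    simp only [Finset.mem_symmDiff, mem_toFinset, mem_append] at hx ⊢
    tauto
  calc _ ≤ (u ++ v).toFinset.card := Finset.card_le_card hsub
    _ ≤ (u ++ v).length := toFinset_card_le _
    _ = u.length + v.length := length_append

end List

theorem Finset.exists_subset_sort_eq_of_sublist {α : Type*} [LinearOrder α] {s : Finset α}
    {l : List α} (h : l.Sublist (s.sort (· ≤ ·))) : ∃ t ⊆ s, t.sort (· ≤ ·) = l := by
  classical
  have hl : l.Pairwise (· < ·) := (s.sortedLT_sort.pairwise).sublist h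
  refine ⟨l.toFinset, fun x hx => (mem_sort _).1 (h.subset (List.mem_toFinset.1 hx)), ?_⟩
  exact (List.toFinset_sort _ (hl.imp ne_of_lt)).2 (hl.imp le_of_lt)

theorem exists_sort_eq_append_of_lex_consecutive {α : Type*} [LinearOrder α]
    {X : Set (Finset α)} (hdc : ∀ T ∈ X, ∀ R ⊆ T, R ∈ X) {R R' : Finset α}
    (hR : R ∈ X) (hR' : R' ∈ X) (hlt : List.Lex (· < ·) (R.sort (· ≤ ·)) (R'.sort (· ≤ ·)))
    (hcons : ∀ Q ∈ X, ¬(List.Lex (· < ·) (R.sort (· ≤ ·)) (Q.sort (· ≤ ·)) ∧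
      List.Lex (· < ·) (Q.sort (· ≤ ·)) (R'.sort (· ≤ ·)))) :
    ∃ p u b, R.sort (· ≤ ·) = p ++ u ∧ u.length ≤ 2 ∧ R'.sort (· ≤ ·) = p ++ [b] := by
  have hbetween : ∀ T ∈ X, ∀ l, l.Sublist (T.sort (· ≤ ·)) →
      ¬(List.Lex (· < ·) (R.sort (· ≤ ·)) l ∧ List.Lex (· < ·) l (R'.sort (· ≤ ·))) := by
    intro T hT l hl
    obtain ⟨Q, hQT, rfl⟩ := Finset.exists_subset_sort_eq_of_sublist hl
    exact hcons Q (hdc T hT Q hQT)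
  obtain ⟨p, b, t', hr', hr⟩ := hlt.exists_eq_append_cons
  have hlt_pb : List.Lex (· < ·) (R.sort (· ≤ ·)) (p ++ [b]) := by
    rcases hr with hr | ⟨a, t, hr, hab⟩
    · simpa [hr] using List.Lex.append_left _ (List.Lex.nil : List.Lex (· < ·) [] [b]) p
    · rw [hr]
      exact List.Lex.append_left _ (.rel hab) p
  have ht' : t' = [] := by
    obtain _ | ⟨c, t'⟩ := t'
    · rfl
    have hsub : (p ++ [b]).Sublist (R'.sort (· ≤ ·)) :=
      hr' ▸ ((List.nil_sublist _).cons_cons b).append_left p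
    have hlt_r' : List.Lex (· < ·) (p ++ [b]) (R'.sort (· ≤ ·)) :=
      hr' ▸ List.Lex.append_left _ (.cons .nil) p
    exact absurd ⟨hlt_pb, hlt_r'⟩ (hbetween R' hR' _ hsub)
  rw [ht'] at hr'
  rcases hr with hr | ⟨a, t, hr, hab⟩
  · exact ⟨p, [], b, by simp [hr], by simp, hr'⟩
  obtain _ | ⟨c, _ | ⟨d, t⟩⟩ := t
  · exact ⟨p, [a], b, hr, by simp, hr'⟩
  · exact ⟨p, [a, c], b, hr, by simp, hr'⟩
  have hcd : c < d := by
    have hsorted := R.sortedLT_sort.pairwise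
    rw [hr, List.pairwise_append] at hsorted
    exact List.rel_of_pairwise_cons hsorted.2.1.of_cons (by simp)
  have hsub : (p ++ a :: d :: t).Sublist (R.sort (· ≤ ·)) :=
    hr ▸ ((List.sublist_cons_self c _).cons_cons a).append_left p
  have hlt_r : List.Lex (· < ·) (R.sort (· ≤ ·)) (p ++ a :: d :: t) := by
    simpa [hr] using List.Lex.append_left _ (.rel hcd) (p ++ [a])
  have hlt_r' : List.Lex (· < ·) (p ++ a :: d :: t) (R'.sort (· ≤ ·)) :=
    hr' ▸ List.Lex.append_left _ (.rel hab) p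
  exact absurd ⟨hlt_r, hlt_r'⟩ (hbetween R hR _ hsub)

theorem symmetric_difference_lex_general {α : Type*} [LinearOrder α]
    (X : Set (Finset α))
    (hdc : ∀ T ∈ X, ∀ R ⊆ T, R ∈ X)
    (R R' : Finset α) (hR : R ∈ X) (hR' : R' ∈ X)
    (hlt : List.Lex (· < ·) (R.sort (· ≤ ·)) (R'.sort (· ≤ ·)))
    (hcons : ∀ Q ∈ X, ¬(List.Lex (· < ·) (R.sort (· ≤ ·)) (Q.sort (· ≤ ·)) ∧
      List.Lex (· < ·) (Q.sort (· ≤ ·)) (R'.sort (· ≤ ·)))) :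
    (symmDiff R R').card ≤ 3 := by
  classical
  obtain ⟨p, u, b, hr, hu, hr'⟩ := exists_sort_eq_append_of_lex_consecutive hdc hR hR' hlt hcons
  rw [← Finset.sort_toFinset R (· ≤ ·), ← Finset.sort_toFinset R' (· ≤ ·), hr, hr']
  calc _ ≤ u.length + [b].length := List.card_symmDiff_toFinset_append_le p u [b]
    _ ≤ 3 := by simp; omega

theorem symmetric_difference_lex {α : Type*} [Fintype α] [LinearOrder α]
    (X : Set (Finset α))
    (hdc : ∀ T ∈ X, ∀ R ⊆ T, R ∈ X)
    (R R' : Finset α) (hR : R ∈ X) (hR' : R' ∈ X)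
    (hlt : List.Lex (· < ·) (R.sort (· ≤ ·)) (R'.sort (· ≤ ·)))
    (hcons : ∀ Q ∈ X, ¬(List.Lex (· < ·) (R.sort (· ≤ ·)) (Q.sort (· ≤ ·)) ∧
      List.Lex (· < ·) (Q.sort (· ≤ ·)) (R'.sort (· ≤ ·)))) :
    (symmDiff R R').card ≤ 3 :=
  symmetric_difference_lex_general X hdc R R' hR hR' hlt hcons
end
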